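/- arXiv:2107.00584 — 2 statements merged into one kernel-verified Lean document; each statement's English description precedes it below -/
import Mathlib

section
/- Let G be a finite noncyclic group and C₀ a cyclic subgroup of G. Then G is a flower group with pistil C₀ if and only if there exist k ≥ 1 and distinct μ-subgroups C₁, …, C_k of G such that C_i ∩ C_j = C₀ for all 1 ≤ i < j ≤ k and |C₁| + |C₂| + ⋯ + |C_k| − (k−1)·|C₀| = |G|. -/
/-- A cyclic subgroup `C` of `G` is a μ-subgroup if it is not contained in any cyclic
subgroup of `G` other than `C` itself. -/
def IsMuSubgroup {G : Type*} [Group G] (C : Subgroup G) : Prop :=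
  IsCyclic ↥C ∧ ∀ K : Subgroup G, IsCyclic ↥K → C ≤ K → C = K

/-- A noncyclic group `G` is a flower group with pistil `C0` if any two distinct
μ-subgroups of `G` intersect exactly in `C0`. -/
def IsFlowerGroup {G : Type*} [Group G] (C0 : Subgroup G) : Prop :=
  ¬ IsCyclic G ∧
    ∀ C C' : Subgroup G, IsMuSubgroup C → IsMuSubgroup C' → C ≠ C' → C ⊓ C' = C0

/-!
If finitely many sets pairwise meet exactly in `C₀`, inclusion–exclusion collapses to
`∑ |Cᵢ| = |⋃ Cᵢ| + (k - 1)|C₀|`, so the size condition says precisely that the `Cᵢ` cover `G`.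
The μ-subgroups are the maximal cyclic subgroups; they cover `G`, and a μ-subgroup lies in
any cyclic subgroup containing one of its generators. Hence a covering family of μ-subgroups
contains every μ-subgroup, and the flower condition on all μ-subgroups is the same as the
pairwise condition on the family.
-/

open Finset in
theorem Set.sum_ncard_add_ncard_eq_ncard_biUnion_add {ι α : Type*} {s : Finset ι}
    (hs : s.Nonempty) {f : ι → Set α} (hf : ∀ i ∈ s, (f i).Finite) {t : Set α}
    (hft : ∀ i ∈ s, ∀ j ∈ s, i ≠ j → f i ∩ f j = t) :
    ∑ i ∈ s, (f i).ncard + t.ncard = (⋃ i ∈ s, f i).ncard + #s * t.ncard := by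
  induction hs using Finset.Nonempty.cons_induction with
  | singleton a => simp
  | cons a s ha hs ih =>
    simp only [Finset.mem_cons, forall_eq_or_imp] at hf hft
    have hU : (⋃ j ∈ s, f j).Finite := s.finite_toSet.biUnion hf.2
    have hinter : f a ∩ ⋃ j ∈ s, f j = t := by
      rw [Set.inter_iUnion₂]
      calc ⋃ j ∈ s, f a ∩ f j = ⋃ j ∈ s, t :=
            Set.iUnion₂_congr fun j hj => hft.1.2 j hj (ne_of_mem_of_not_mem hj ha).symm
        _ = t := Set.biUnion_const hs t
    have hunion := Set.ncard_union_add_ncard_inter (f a) (⋃ j ∈ s, f j) hf.1 hU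
    rw [hinter] at hunion
    have hs_count := ih hf.2 fun i hi j hj => (hft.2 i hi).2 j hj
    classical
    rw [Finset.cons_eq_insert, Finset.sum_insert ha, Finset.card_insert_of_notMem ha,
      Finset.set_biUnion_insert]
    linarith

theorem Set.sum_ncard_eq_card_add_iff_iUnion_eq_univ {ι α : Type*} [Fintype ι] [Nonempty ι]
    [Finite α] {f : ι → Set α} {t : Set α} (hft : ∀ i j, i ≠ j → f i ∩ f j = t) :
    ∑ i, (f i).ncard = Nat.card α + (Fintype.card ι - 1) * t.ncard ↔ ⋃ i, f i = univ := by
  have hcount := Set.sum_ncard_add_ncard_eq_ncard_biUnion_add Finset.univ_nonempty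
    (fun i _ => toFinite (f i)) fun i _ j _ => hft i j
  simp only [Finset.mem_univ, iUnion_true, Finset.card_univ] at hcount
  obtain ⟨m, hm⟩ := Nat.exists_eq_succ_of_ne_zero (Fintype.card_ne_zero (α := ι))
  rw [hm, Nat.succ_mul] at hcount
  rw [hm, Nat.succ_sub_one]
  constructor
  · intro hsum
    by_contra hne
    have := ncard_lt_card hne
    omega
  · intro hcover
    rw [hcover, ncard_univ] at hcount
    omega

section

variable {G : Type*} [Group G]

theorem Subgroup.sum_card_eq_card_add_iff_iUnion_eq_univ [Finite G] {ι : Type*} [Fintype ι]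
    [Nonempty ι] {C : ι → Subgroup G} {C0 : Subgroup G} (hC : ∀ i j, i ≠ j → C i ⊓ C j = C0) :
    ∑ i, Nat.card (C i) = Nat.card G + (Fintype.card ι - 1) * Nat.card C0 ↔
      ⋃ i, (C i : Set G) = Set.univ := by
  have hcoe : ∀ i j, i ≠ j → (C i : Set G) ∩ C j = C0 := fun i j hij => by
    rw [← Subgroup.coe_inf, hC i j hij]
  simpa only [← Nat.card_coe_set_eq, SetLike.coe_sort_coe] using
    Set.sum_ncard_eq_card_add_iff_iUnion_eq_univ hcoe

theorem isMuSubgroup_iff_maximal {C : Subgroup G} :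
    IsMuSubgroup C ↔ Maximal (fun K : Subgroup G => IsCyclic K) C :=
  ⟨fun h => ⟨h.1, fun _ hK hle => (h.2 _ hK hle).ge⟩,
    fun h => ⟨h.1, fun _ hK hle => le_antisymm hle (h.2 hK hle)⟩⟩

theorem exists_isMuSubgroup_mem [Finite G] (g : G) :
    ∃ C : Subgroup G, IsMuSubgroup C ∧ g ∈ C := by
  obtain ⟨C, hle, hC⟩ := Finite.exists_le_maximal (p := fun K : Subgroup G => IsCyclic K)
    (Subgroup.isCyclic_zpowers g)
  exact ⟨C, isMuSubgroup_iff_maximal.2 hC, hle (Subgroup.mem_zpowers g)⟩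

theorem IsMuSubgroup.exists_eq_of_forall_mem {ι : Type*} {D : Subgroup G} (hD : IsMuSubgroup D)
    {C : ι → Subgroup G} (hC : ∀ i, IsCyclic (C i)) (hcover : ∀ g, ∃ i, g ∈ C i) :
    ∃ i, D = C i := by
  obtain ⟨d, rfl⟩ := (Subgroup.isCyclic_iff_exists_zpowers_eq_top D).1 hD.1
  obtain ⟨i, hi⟩ := hcover d
  exact ⟨i, hD.2 _ (hC i) (Subgroup.zpowers_le.2 hi)⟩

end

theorem stmt7_general {G : Type*} [Group G] [Finite G] (C0 : Subgroup G)
    (hnc : ¬ IsCyclic G) :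
    IsFlowerGroup C0 ↔
      ∃ k : ℕ, 1 ≤ k ∧ ∃ C : Fin k → Subgroup G,
        Function.Injective C ∧ (∀ i, IsMuSubgroup (C i)) ∧
        (∀ i j, i ≠ j → C i ⊓ C j = C0) ∧
        ∑ i, Nat.card (C i) = Nat.card G + (k - 1) * Nat.card C0 := by
  constructor
  · rintro ⟨-, hflower⟩
    obtain ⟨k, C, hrange⟩ := (Set.toFinite {D : Subgroup G | IsMuSubgroup D}).fin_embedding
    have hmu (i : Fin k) : IsMuSubgroup (C i) := hrange.subset ⟨i, rfl⟩
    have hcover (g : G) : ∃ i, g ∈ C i := by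
      obtain ⟨D, hD, hg⟩ := exists_isMuSubgroup_mem g
      obtain ⟨i, rfl⟩ := hrange.symm.subset hD
      exact ⟨i, hg⟩
    obtain ⟨i, -⟩ := hcover 1
    have : Nonempty (Fin k) := ⟨i⟩
    have hpair (i j : Fin k) (hij : i ≠ j) : C i ⊓ C j = C0 :=
      hflower _ _ (hmu i) (hmu j) (C.injective.ne hij)
    refine ⟨k, i.pos, C, C.injective, hmu, hpair, ?_⟩
    simpa only [Fintype.card_fin] using
      (Subgroup.sum_card_eq_card_add_iff_iUnion_eq_univ hpair).2 (Set.iUnion_eq_univ_iff.2 hcover)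
  · rintro ⟨k, hk, C, -, hmu, hpair, hsum⟩
    have : Nonempty (Fin k) := Fin.pos_iff_nonempty.1 hk
    have hcover := Set.iUnion_eq_univ_iff.1 <|
      (Subgroup.sum_card_eq_card_add_iff_iUnion_eq_univ hpair).1 (by simpa only [Fintype.card_fin])
    refine ⟨hnc, fun D D' hD hD' hne => ?_⟩
    obtain ⟨i, rfl⟩ := hD.exists_eq_of_forall_mem (fun i => (hmu i).1) hcover
    obtain ⟨j, rfl⟩ := hD'.exists_eq_of_forall_mem (fun i => (hmu i).1) hcover
    exact hpair i j fun h => hne (congrArg C h)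

/-- G is a flower group with pistil C₀ iff there exist k ≥ 1 and distinct
μ-subgroups C₁,…,C_k with pairwise intersection C₀ and |C₁| + ⋯ + |C_k| − (k−1)|C₀| = |G|. -/
theorem stmt7 {G : Type*} [Group G] [Finite G] (C0 : Subgroup G)
    (hnc : ¬ IsCyclic G) (hc0 : IsCyclic ↥C0) :
    IsFlowerGroup C0 ↔
      ∃ k : ℕ, 1 ≤ k ∧ ∃ C : Fin k → Subgroup G,
        Function.Injective C ∧ (∀ i, IsMuSubgroup (C i)) ∧
        (∀ i j, i ≠ j → C i ⊓ C j = C0) ∧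
        ∑ i, Nat.card (C i) = Nat.card G + (k - 1) * Nat.card C0 :=
  stmt7_general C0 hnc
end

section
/- Let G be a flower group with pistil C₀ of order c₀ and petals C₁, …, C_k of orders c₁, …, c_k. Then there exist elements g₁, …, g_k with g_i a generator of C_i for each 1 ≤ i ≤ k, such that g_i^(c_i/c₀) = g_j^(c_j/c₀) for all 1 ≤ i < j ≤ k. -/
/-!
Since `G` is not cyclic, every petal meets a second petal in exactly `C₀`, so the pistil
lies in every petal and is cyclic; fix a generator `x` of it. In a cyclic group `⟨a⟩` of
order `n`, an element `x` of order `c` is `a ^ (d * s)` with `d = n / c` and `s` coprime to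
`c`; lifting `s` to a unit `b` modulo `n` with `b ≡ s [MOD c]` gives a generator `g = a ^ b`
with `g ^ d = x`. Doing this in every petal yields generators whose
`(cᵢ / c₀)`-th powers all equal `x`.
-/

open Subgroup

theorem Nat.exists_coprime_modEq_of_dvd {c n s : ℕ} [NeZero n] (hcn : c ∣ n)
    (hs : s.Coprime c) : ∃ b, b.Coprime n ∧ b ≡ s [MOD c] := by
  obtain ⟨u, hu⟩ := ZMod.unitsMap_surjective hcn (ZMod.unitOfCoprime s hs)
  refine ⟨(u : ZMod n).val, ZMod.val_coe_unit_coprime u, ?_⟩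
  rw [← ZMod.natCast_eq_natCast_iff, ZMod.natCast_val, ← ZMod.unitsMap_val hcn, hu,
    ZMod.coe_unitOfCoprime]

theorem zpowers_pow_eq_of_coprime {G : Type*} [Group G] {a : G} {b : ℕ}
    (hb : b.Coprime (orderOf a)) : zpowers (a ^ b) = zpowers a :=
  le_antisymm (zpowers_le.mpr (pow_mem (mem_zpowers a) b))
    (zpowers_le.mpr (mem_zpowers_pow_iff.mpr hb))

theorem exists_zpowers_eq_and_pow_orderOf_div_eq {G : Type*} [Group G] {a x : G}
    (ha : IsOfFinOrder a) (hx : x ∈ zpowers a) :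
    ∃ g, zpowers g = zpowers a ∧ g ^ (orderOf a / orderOf x) = x := by
  obtain ⟨m, rfl⟩ := ha.mem_powers_iff_mem_zpowers.mpr hx
  have hc : 0 < orderOf (a ^ m) := ha.pow.orderOf_pos
  obtain ⟨d, hn⟩ := orderOf_dvd_of_mem_zpowers hx
  have : NeZero (orderOf a) := ⟨ha.orderOf_pos.ne'⟩
  have hd : d ≠ 0 := by rintro rfl; simp [ha.orderOf_pos.ne'] at hn
  have hdm : d ∣ m := by
    refine Nat.dvd_of_mul_dvd_mul_right hc ?_
    rw [mul_comm d, ← hn]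
    exact orderOf_dvd_of_pow_eq_one (by rw [pow_mul, pow_orderOf_eq_one])
  obtain ⟨s, rfl⟩ := hdm
  have hs : s.Coprime (orderOf (a ^ (d * s))) := by
    have hord : orderOf (a ^ d) = orderOf (a ^ (d * s)) := by
      rw [orderOf_pow_of_dvd hd ⟨_, hn.trans (mul_comm _ _)⟩, hn, Nat.mul_div_cancel _ hd.bot_lt]
    have h1 := IsOfFinOrder.orderOf_pow (a ^ d) s ha.pow
    rw [← pow_mul, hord, eq_comm, Nat.div_eq_self] at h1
    exact Nat.Coprime.symm (h1.resolve_left hc.ne')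
  obtain ⟨b, hbn, hbs⟩ := Nat.exists_coprime_modEq_of_dvd ⟨d, hn⟩ hs
  refine ⟨a ^ b, zpowers_pow_eq_of_coprime hbn, ?_⟩
  rw [hn, Nat.mul_div_cancel_left _ hc, ← pow_mul, mul_comm d s, pow_eq_pow_iff_modEq, hn]
  exact hbs.mul_right' d

section Flower

variable {G : Type*} [Group G] [Finite G]

theorem exists_isMuSubgroup_le {H : Subgroup G} (hH : IsCyclic H) :
    ∃ K, IsMuSubgroup K ∧ H ≤ K := by
  obtain ⟨K, hHK, hK⟩ := Finite.exists_le_maximal (p := fun K : Subgroup G => IsCyclic K ∧ H ≤ K)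
    ⟨hH, le_rfl⟩
  exact ⟨K, ⟨hK.1.1, fun L hL hKL => le_antisymm hKL (hK.2 ⟨hL, hK.1.2.trans hKL⟩ hKL)⟩, hHK⟩

theorem exists_isMuSubgroup : ∃ K : Subgroup G, IsMuSubgroup K :=
  (exists_isMuSubgroup_le (H := ⊥) inferInstance).imp fun _ => And.left

theorem exists_isMuSubgroup_ne (hG : ¬IsCyclic G) (C : Subgroup G) :
    ∃ C', IsMuSubgroup C' ∧ C' ≠ C := by
  by_contra! hall
  obtain ⟨K, hK⟩ := exists_isMuSubgroup (G := G)
  obtain ⟨g, hg⟩ := C.isCyclic_iff_exists_zpowers_eq_top.mp (hall K hK ▸ hK.1)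
  refine hG (isCyclic_iff_exists_zpowers_eq_top.mpr ⟨g, eq_top_iff.mpr fun y _ => ?_⟩)
  obtain ⟨K', hK', hyK'⟩ := exists_isMuSubgroup_le (isCyclic_zpowers y)
  rw [hg, ← hall K' hK']
  exact hyK' (mem_zpowers y)

namespace IsFlowerGroup

variable {C0 : Subgroup G}

theorem le_of_isMuSubgroup (hG : IsFlowerGroup C0) {C : Subgroup G} (hC : IsMuSubgroup C) :
    C0 ≤ C := by
  obtain ⟨C', hC', hne⟩ := exists_isMuSubgroup_ne hG.1 C
  rw [← hG.2 C' C hC' hC hne]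
  exact inf_le_right

theorem isCyclic_pistil (hG : IsFlowerGroup C0) : IsCyclic C0 := by
  obtain ⟨K, hK⟩ := exists_isMuSubgroup (G := G)
  have := hK.1
  exact isCyclic_of_le (hG.le_of_isMuSubgroup hK)

theorem exists_zpowers_eq_and_pow_eq (hG : IsFlowerGroup C0) {C : Subgroup G}
    (hC : IsMuSubgroup C) {x : G} (hx : zpowers x = C0) :
    ∃ g, zpowers g = C ∧ g ^ (Nat.card C / Nat.card C0) = x := by
  obtain ⟨a, rfl⟩ := C.isCyclic_iff_exists_zpowers_eq_top.mp hC.1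
  have hxa : x ∈ zpowers a := hG.le_of_isMuSubgroup hC (hx ▸ mem_zpowers x)
  rw [← hx, Nat.card_zpowers, Nat.card_zpowers]
  exact exists_zpowers_eq_and_pow_orderOf_div_eq (isOfFinOrder_of_finite a) hxa

end IsFlowerGroup

end Flower

theorem stmt11_general {G : Type*} [Group G] [Finite G] (C0 : Subgroup G)
    (hG : IsFlowerGroup C0) (k : ℕ) (P : Fin k → Subgroup G)
    (hpetals : ∀ C : Subgroup G, IsMuSubgroup C ↔ ∃ i, C = P i) :
    ∃ g : Fin k → G, (∀ i, Subgroup.zpowers (g i) = P i) ∧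
      ∀ i j, i < j →
        g i ^ (Nat.card (P i) / Nat.card C0) = g j ^ (Nat.card (P j) / Nat.card C0) := by
  obtain ⟨x, hx⟩ := C0.isCyclic_iff_exists_zpowers_eq_top.mp hG.isCyclic_pistil
  choose g hgen hpow using fun i =>
    hG.exists_zpowers_eq_and_pow_eq ((hpetals (P i)).mpr ⟨i, rfl⟩) hx
  exact ⟨g, hgen, fun i j _ => (hpow i).trans (hpow j).symm⟩

/-- Every flower group has a compatible system of generators: generators
g_i of the petals C_i with g_i^(c_i/c₀) = g_j^(c_j/c₀) for all i, j. -/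
theorem stmt11 {G : Type*} [Group G] [Finite G] (C0 : Subgroup G)
    (hG : IsFlowerGroup C0) (k : ℕ) (P : Fin k → Subgroup G)
    (hinj : Function.Injective P)
    (hpetals : ∀ C : Subgroup G, IsMuSubgroup C ↔ ∃ i, C = P i) :
    ∃ g : Fin k → G, (∀ i, Subgroup.zpowers (g i) = P i) ∧
      ∀ i j, i < j →
        g i ^ (Nat.card (P i) / Nat.card C0) = g j ^ (Nat.card (P j) / Nat.card C0) :=
  stmt11_general C0 hG k P hpetals
end
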